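/- arXiv:1011.4340 — 5 statements merged into one kernel-verified Lean document; each statement's English description precedes it below -/
import Mathlib

section
/- In a stratified space, every strictly ascending chain of strata is finite: there is no sequence f : ℕ → 𝒮 with f(n) ≤ f(n+1) and f(n) ≠ f(n+1) for all n. -/
open Topology

/-- A stratification of a topological space `X`: a locally finite partition of `X`
into nonempty locally closed subsets (the strata) satisfying the frontier condition:
for all strata `S`, `T`, if `closure S ∩ T ≠ ∅` then `T ⊆ closure S`.
The incidence relation is `S' ≤ S ↔ S' ⊆ closure S`. -/
structure Stratification (X : Type*) [TopologicalSpace X] : Type _ where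
  strata : Set (Set X)
  nonempty : ∀ S ∈ strata, S.Nonempty
  locallyClosed : ∀ S ∈ strata, IsLocallyClosed S
  covers : ⋃₀ strata = Set.univ
  pairwiseDisjoint : strata.PairwiseDisjoint id
  locallyFinite : ∀ x : X, ∃ U ∈ nhds x, {S ∈ strata | (S ∩ U).Nonempty}.Finite
  frontier_cond : ∀ S ∈ strata, ∀ T ∈ strata, (closure S ∩ T).Nonempty → T ⊆ closure S

/-! The incidence relation is a partial order whose closures strictly grow along a strict chain,
while local finiteness puts a point of the bottom stratum in the closure of only finitely many
strata; so an infinite strict chain would have to be injective with finite range. -/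

lemma IsLocallyClosed.disjoint_closure_of_subset_closure {X : Type*} [TopologicalSpace X]
    {S T : Set X} (hT : IsLocallyClosed T) (hST : S ⊆ closure T) (hdisj : Disjoint S T) :
    Disjoint (closure S) T := by
  have hclosed : IsClosed (closure T \ T) := isOpen_compl_iff.mp hT.isOpen_coborder
  have hS : S ⊆ closure T \ T := fun x hx ↦ ⟨hST hx, hdisj.notMem_of_mem_left hx⟩
  exact Set.disjoint_sdiff_left.mono_left (hclosed.closure_subset_iff.mpr hS)

namespace Stratification

variable {X : Type*} [TopologicalSpace X] (𝒮 : Stratification X)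

lemma eq_of_subset_closure_of_subset_closure {S T : Set X} (hS : S ∈ 𝒮.strata)
    (hT : T ∈ 𝒮.strata) (hST : S ⊆ closure T) (hTS : T ⊆ closure S) : S = T := by
  by_contra hne
  obtain ⟨t, ht⟩ := 𝒮.nonempty T hT
  have hdisj := (𝒮.locallyClosed T hT).disjoint_closure_of_subset_closure hST
    (𝒮.pairwiseDisjoint hS hT hne)
  exact hdisj.ne_of_mem (hTS ht) ht rfl

lemma closure_ssubset_closure {S T : Set X} (hS : S ∈ 𝒮.strata) (hT : T ∈ 𝒮.strata)
    (hST : S ⊆ closure T) (hne : S ≠ T) : closure S ⊂ closure T := by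
  refine ⟨closure_minimal hST isClosed_closure, fun hTS ↦ hne ?_⟩
  exact 𝒮.eq_of_subset_closure_of_subset_closure hS hT hST (subset_closure.trans hTS)

lemma finite_setOf_mem_closure (x : X) : {S ∈ 𝒮.strata | x ∈ closure S}.Finite := by
  obtain ⟨U, hU, hfin⟩ := 𝒮.locallyFinite x
  refine hfin.subset fun S ⟨hS, hxS⟩ ↦ ⟨hS, ?_⟩
  obtain ⟨y, hyU, hyS⟩ := mem_closure_iff_nhds.mp hxS U hU
  exact ⟨y, hyS, hyU⟩

end Stratification

/-- Every strictly ascending chain of strata is finite: there is no sequence of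
strata `f : ℕ → 𝒮` with `f n ≤ f (n+1)` and `f n ≠ f (n+1)` for all `n`. -/
theorem no_infinite_ascending_chain {X : Type*} [TopologicalSpace X]
    (𝒮 : Stratification X) :
    ¬ ∃ f : ℕ → Set X, (∀ n, f n ∈ 𝒮.strata) ∧
      ∀ n, f n ⊆ closure (f (n + 1)) ∧ f n ≠ f (n + 1) := by
  rintro ⟨f, hf, hchain⟩
  have hstrict : StrictMono (closure ∘ f) := strictMono_nat_of_lt_succ fun n ↦
    𝒮.closure_ssubset_closure (hf n) (hf (n + 1)) (hchain n).1 (hchain n).2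
  obtain ⟨x, hx⟩ := 𝒮.nonempty (f 0) (hf 0)
  have hrange : Set.range f ⊆ {S ∈ 𝒮.strata | x ∈ closure S} := by
    rintro _ ⟨n, rfl⟩
    exact ⟨hf n, hstrict.monotone (Nat.zero_le n) (subset_closure hx)⟩
  exact Set.infinite_range_of_injective hstrict.injective.of_comp
    ((𝒮.finite_setOf_mem_closure x).subset hrange)
end

section
/- Let X be a Hausdorff, locally compact, second countable topological space with a stratification 𝒮, and let ℱ ⊆ 𝒮 be a family of pairwise non-comparable strata (for distinct S, S' ∈ ℱ, neither S ≤ S' nor S' ≤ S). Then there exists a family (V_S)_{S∈ℱ} of pairwise disjoint open subsets of X with S ⊆ V_S for each S ∈ ℱ. -/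
open Topology

/-- In a Hausdorff, locally compact, second countable stratified space, any family
of pairwise non-comparable strata can be separated by pairwise disjoint open sets. -/
theorem noncomparable_strata_separated {X : Type*} [TopologicalSpace X]
    [T2Space X] [LocallyCompactSpace X] [SecondCountableTopology X]
    (𝒮 : Stratification X) (ℱ : Set (Set X)) (hℱ : ℱ ⊆ 𝒮.strata)
    (hnc : ∀ S ∈ ℱ, ∀ S' ∈ ℱ, S ≠ S' → ¬ S ⊆ closure S' ∧ ¬ S' ⊆ closure S) :
    ∃ V : Set X → Set X, (∀ S ∈ ℱ, IsOpen (V S)) ∧ (∀ S ∈ ℱ, S ⊆ V S) ∧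
      ∀ S ∈ ℱ, ∀ S' ∈ ℱ, S ≠ S' → Disjoint (V S) (V S') := by
  classical
  letI : MetricSpace X := TopologicalSpace.metrizableSpaceMetric X
  -- distinct strata in ℱ are separated: `closure S' ∩ S = ∅`
  have hsep : ∀ S ∈ ℱ, ∀ S' ∈ ℱ, S ≠ S' → ∀ x ∈ S, x ∉ closure S' := by
    intro S hS S' hS' hne x hx hmem
    exact (hnc S hS S' hS' hne).1
      (𝒮.frontier_cond S' (hℱ hS') S (hℱ hS) ⟨x, hmem, hx⟩)
  -- the family of strata in `ℱ \ {S}` is locally finite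
  have hlf : ∀ S : Set X, LocallyFinite (fun i : ↥(ℱ \ {S}) => (i : Set X)) := by
    intro S x
    obtain ⟨U, hU, hfin⟩ := 𝒮.locallyFinite x
    refine ⟨U, hU, ?_⟩
    have hsub : {i : ↥(ℱ \ {S}) | ((i : Set X) ∩ U).Nonempty} ⊆
        Subtype.val ⁻¹' {T | T ∈ 𝒮.strata ∧ (T ∩ U).Nonempty} :=
      fun i hi => ⟨hℱ i.2.1, hi⟩
    exact ((hfin.preimage Subtype.val_injective.injOn).subset hsub)
  set B : Set X → Set X := fun S => ⋃ i : ↥(ℱ \ {S}), (i : Set X) with hBdef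
  set V : Set X → Set X :=
    fun S => {x | EMetric.infEdist x S < EMetric.infEdist x (B S)} with hVdef
  have hBle : ∀ S ∈ ℱ, ∀ S' ∈ ℱ, S ≠ S' → ∀ x : X,
      EMetric.infEdist x (B S) ≤ EMetric.infEdist x S' := by
    intro S hS S' hS' hne x
    exact EMetric.infEdist_anti (Set.subset_iUnion_of_subset
      (⟨S', hS', fun h => hne h.symm⟩ : ↥(ℱ \ {S}))
      (by exact Set.Subset.rfl))
  refine ⟨V, ?_, ?_, ?_⟩
  · intro S _
    exact isOpen_lt EMetric.continuous_infEdist EMetric.continuous_infEdist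
  · intro S hS x hx
    have h0 : EMetric.infEdist x S = 0 := EMetric.infEdist_zero_of_mem hx
    have hxB : x ∉ closure (B S) := by
      rw [hBdef]
      simp only []
      rw [(hlf S).closure_iUnion]
      intro hmem
      obtain ⟨t, ⟨i, rfl⟩, hxt⟩ := hmem
      exact hsep S hS i i.2.1 (fun h => i.2.2 h.symm) x hx hxt
    have hpos : 0 < EMetric.infEdist x (B S) := by
      rcases eq_or_ne (EMetric.infEdist x (B S)) 0 with h | h
      · exact absurd (EMetric.mem_closure_iff_infEdist_zero.mpr h) hxB
      · exact pos_iff_ne_zero.mpr h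
    show EMetric.infEdist x S < EMetric.infEdist x (B S)
    rwa [h0]
  · intro S hS S' hS' hne
    rw [Set.disjoint_left]
    intro x hxS hxS'
    have h1 : EMetric.infEdist x S < EMetric.infEdist x S' :=
      lt_of_lt_of_le hxS (hBle S hS S' hS' hne x)
    have h2 : EMetric.infEdist x S' < EMetric.infEdist x S :=
      lt_of_lt_of_le hxS' (hBle S' hS' S hS (Ne.symm hne) x)
    exact absurd (h1.trans h2) (lt_irrefl _)
end

section
/- Let X be a topological space with stratification 𝒮, and let ~ be the equivalence relation on 𝒮 generated by the comparability relation (S related to S' iff S ≤ S' or S' ≤ S). Then for every equivalence class C of ~, the union ⋃C is both open and closed in X. Consequently, if 𝒮 is nonempty, X is irreducible (i.e., 𝒮 cannot be partitioned into two nonempty subfamilies 𝒮₁, 𝒮₂ such that ⋃𝒮₁ and ⋃𝒮₂ are both open in X) if and only if ~ has exactly one equivalence class. -/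
open Topology

/-- Any saturated subfamily of strata has closed union. -/
lemma Stratification.closed_of_saturated {X : Type*} [TopologicalSpace X]
    (𝒮 : Stratification X) (A : Set (Set X)) (hA : A ⊆ 𝒮.strata)
    (hsat : ∀ S ∈ A, ∀ T ∈ 𝒮.strata, T ⊆ closure S → T ∈ A) :
    IsClosed (⋃₀ A) := by
  have hlf : LocallyFinite (fun s : A => (s : Set X)) := by
    intro x
    obtain ⟨U, hU, hfin⟩ := 𝒮.locallyFinite x
    refine ⟨U, hU, ?_⟩
    have hsub : {i : A | ((i : Set X) ∩ U).Nonempty} ⊆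
        Subtype.val ⁻¹' {S ∈ 𝒮.strata | (S ∩ U).Nonempty} :=
      fun i hi => ⟨hA i.2, hi⟩
    exact ((hfin.preimage Subtype.val_injective.injOn).subset hsub)
  rw [Set.sUnion_eq_iUnion]
  apply isClosed_of_closure_subset
  rw [hlf.closure_iUnion]
  rintro x hx
  obtain ⟨_, ⟨⟨S, hS⟩, rfl⟩, hxS⟩ := hx
  have hxuniv : x ∈ ⋃₀ 𝒮.strata := by rw [𝒮.covers]; trivial
  obtain ⟨T, hT, hxT⟩ := hxuniv
  have hTS : T ⊆ closure S := 𝒮.frontier_cond S (hA hS) T hT ⟨x, hxS, hxT⟩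
  exact Set.mem_iUnion.2 ⟨⟨T, hsat S hS T hT hTS⟩, hxT⟩

/-- Let `~` be the equivalence relation on the strata generated by comparability.
Then the union of each equivalence class is clopen in `X`; consequently, if the
stratification is nonempty, `X` is irreducible (its strata cannot be split into two
nonempty subfamilies with open unions) iff `~` has exactly one equivalence class. -/
theorem irreducible_iff_one_class {X : Type*} [TopologicalSpace X]
    (𝒮 : Stratification X) (r : Set X → Set X → Prop)
    (hr : ∀ S S', r S S' ↔ S ∈ 𝒮.strata ∧ S' ∈ 𝒮.strata ∧
      (S ⊆ closure S' ∨ S' ⊆ closure S)) :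
    (∀ S ∈ 𝒮.strata,
      IsOpen (⋃₀ {S' ∈ 𝒮.strata | Relation.EqvGen r S S'}) ∧
      IsClosed (⋃₀ {S' ∈ 𝒮.strata | Relation.EqvGen r S S'})) ∧
    (𝒮.strata.Nonempty →
      ((¬ ∃ 𝒮₁ 𝒮₂ : Set (Set X), 𝒮₁.Nonempty ∧ 𝒮₂.Nonempty ∧
          𝒮₁ ∪ 𝒮₂ = 𝒮.strata ∧ Disjoint 𝒮₁ 𝒮₂ ∧
          IsOpen (⋃₀ 𝒮₁) ∧ IsOpen (⋃₀ 𝒮₂)) ↔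
        ∀ S ∈ 𝒮.strata, ∀ S' ∈ 𝒮.strata, Relation.EqvGen r S S')) := by
  -- class of S
  set C : Set X → Set (Set X) := fun S => {S' ∈ 𝒮.strata | Relation.EqvGen r S S'} with hC
  have hCsub : ∀ S, C S ⊆ 𝒮.strata := fun S T hT => hT.1
  have hCclosed : ∀ S ∈ 𝒮.strata, IsClosed (⋃₀ C S) := by
    intro S hS
    apply 𝒮.closed_of_saturated _ (hCsub S)
    intro A hA T hT hTc
    refine ⟨hT, Relation.EqvGen.trans _ _ _ hA.2 (Relation.EqvGen.rel _ _ ?_)⟩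
    exact (hr A T).2 ⟨hA.1, hT, Or.inr hTc⟩
  have hcompl : ∀ S ∈ 𝒮.strata, (⋃₀ C S)ᶜ = ⋃₀ (𝒮.strata \ C S) := by
    intro S hS
    ext x
    constructor
    · intro hx
      have hxuniv : x ∈ ⋃₀ 𝒮.strata := by rw [𝒮.covers]; trivial
      obtain ⟨T, hT, hxT⟩ := hxuniv
      exact ⟨T, ⟨hT, fun hTC => hx ⟨T, hTC, hxT⟩⟩, hxT⟩
    · rintro ⟨T, ⟨hT, hTC⟩, hxT⟩ ⟨A, hAC, hxA⟩
      by_cases hAT : A = T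
      · exact hTC (hAT ▸ hAC)
      · exact Set.disjoint_left.mp (𝒮.pairwiseDisjoint (hCsub S hAC) hT hAT) hxA hxT
  have hCopen : ∀ S ∈ 𝒮.strata, IsOpen (⋃₀ C S) := by
    intro S hS
    rw [← isClosed_compl_iff, hcompl S hS]
    apply 𝒮.closed_of_saturated _ Set.diff_subset
    rintro A ⟨hA, hAC⟩ T hT hTc
    refine ⟨hT, fun hTC => hAC ⟨hA, Relation.EqvGen.trans _ _ _ hTC.2 (Relation.EqvGen.symm _ _ (Relation.EqvGen.rel _ _ ?_))⟩⟩
    exact (hr A T).2 ⟨hA, hT, Or.inr hTc⟩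
  refine ⟨fun S hS => ⟨hCopen S hS, hCclosed S hS⟩, fun ⟨S₀, hS₀⟩ => ?_⟩
  constructor
  · intro hnosplit S hS S' hS'
    by_contra hrel
    have hne : (𝒮.strata \ C S).Nonempty := ⟨S', hS', fun h => hrel h.2⟩
    refine hnosplit ⟨C S, 𝒮.strata \ C S, ⟨S, hS, Relation.EqvGen.refl S⟩, hne, ?_, ?_, hCopen S hS, ?_⟩
    · rw [Set.union_diff_cancel' (fun _ => id) (hCsub S)]
    · exact Set.disjoint_sdiff_right.mono_left (le_refl _)
    · rw [← hcompl S hS]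
      exact (hCclosed S hS).isOpen_compl
  · rintro hall ⟨𝒮₁, 𝒮₂, ⟨A₁, hA₁⟩, ⟨A₂, hA₂⟩, hunion, hdisj, hopen₁, hopen₂⟩
    have key : ∀ (𝒯₁ 𝒯₂ : Set (Set X)), 𝒯₁ ∪ 𝒯₂ = 𝒮.strata → Disjoint 𝒯₁ 𝒯₂ →
        IsOpen (⋃₀ 𝒯₂) → ∀ A B : Set X, A ∈ 𝒮.strata → B ⊆ closure A →
        A ∈ 𝒯₁ → B ∈ 𝒯₂ → False := by
      intro 𝒯₁ 𝒯₂ hun hdj hop A B hA hBA hA1 hB2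
      have hB : B ∈ 𝒮.strata := hun ▸ Set.mem_union_right _ hB2
      obtain ⟨b, hb⟩ := 𝒮.nonempty B hB
      have hbU : b ∈ ⋃₀ 𝒯₂ := ⟨B, hB2, hb⟩
      obtain ⟨a, haU, haA⟩ := (mem_closure_iff.mp (hBA hb)) _ hop hbU
      obtain ⟨T, hT2, haT⟩ := haU
      have hAT : A = T := by
        by_contra hne
        exact Set.disjoint_left.mp
          (𝒮.pairwiseDisjoint hA (hun ▸ Set.mem_union_right _ hT2) hne) haA haT
      exact Set.disjoint_left.mp hdj hA1 (hAT ▸ hT2)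
    have inv : ∀ A B : Set X, Relation.EqvGen r A B → (A ∈ 𝒮₁ ↔ B ∈ 𝒮₁) := by
      intro A B h
      induction h with
      | rel A B hAB =>
        obtain ⟨hA, hB, hc⟩ := (hr A B).1 hAB
        have step : ∀ A' B' : Set X, A' ∈ 𝒮.strata → B' ∈ 𝒮.strata →
            (A' ⊆ closure B' ∨ B' ⊆ closure A') → A' ∈ 𝒮₁ → B' ∈ 𝒮₁ := by
          intro A' B' hA' hB' hc' hA1
          rcases (show B' ∈ 𝒮₁ ∪ 𝒮₂ from hunion ▸ hB') with hB1 | hB2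
          · exact hB1
          · rcases hc' with h1 | h2
            · exact absurd (key 𝒮₂ 𝒮₁ (by rw [Set.union_comm]; exact hunion)
                hdisj.symm hopen₁ B' A' hB' h1 hB2 hA1) id
            · exact absurd (key 𝒮₁ 𝒮₂ hunion hdisj hopen₂ A' B' hA' h2 hA1 hB2) id
        constructor
        · exact step A B hA hB hc
        · exact step B A hB hA hc.symm
      | refl A => exact Iff.rfl
      | symm A B _ ih => exact ih.symm
      | trans A B Cc _ _ ih1 ih2 => exact ih1.trans ih2
    have hA1s : A₁ ∈ 𝒮.strata := hunion ▸ Set.mem_union_left _ hA₁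
    have hA2s : A₂ ∈ 𝒮.strata := hunion ▸ Set.mem_union_right _ hA₂
    have : A₂ ∈ 𝒮₁ := (inv A₁ A₂ (hall A₁ hA1s A₂ hA2s)).1 hA₁
    exact Set.disjoint_left.mp hdisj this hA₂
end

section
/- Let f : X → W and h : X → Y be continuous maps of topological spaces which are closed embeddings (homeomorphisms onto closed images), and let Z = W ⊔_X Y be the pushout of f and h in the category of topological spaces, with canonical maps j : W → Z and i : Y → Z. Then j and i are closed embeddings, j(W) ∪ i(Y) = Z, and j(W) ∩ i(Y) = j(f(X)) = i(h(X)). -/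
open Topology

/-- If `f : X → W` and `h : X → Y` are closed embeddings, then in the topological
pushout `Z = W ⊔_X Y` the canonical maps `j : W → Z` and `i : Y → Z` are closed
embeddings, `j(W) ∪ i(Y) = Z`, and `j(W) ∩ i(Y) = j(f(X)) = i(h(X))`. -/
theorem pushout_closedEmbeddings {X W Y : Type*}
    [TopologicalSpace X] [TopologicalSpace W] [TopologicalSpace Y]
    (f : X → W) (h : X → Y)
    (hf : IsClosedEmbedding f) (hh : IsClosedEmbedding h)
    (r : W ⊕ Y → W ⊕ Y → Prop)
    (hrel : ∀ a b, r a b ↔ ∃ x : X, a = Sum.inl (f x) ∧ b = Sum.inr (h x))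
    (j : W → Quot r) (i : Y → Quot r)
    (hj : j = fun w => Quot.mk r (Sum.inl w))
    (hi : i = fun y => Quot.mk r (Sum.inr y)) :
    IsClosedEmbedding j ∧ IsClosedEmbedding i ∧
    Set.range j ∪ Set.range i = Set.univ ∧
    Set.range j ∩ Set.range i = j '' Set.range f ∧
    Set.range j ∩ Set.range i = i '' Set.range h := by
  subst hj hi
  have hfi := hf.injective
  have hhi := hh.injective
  set s : W ⊕ Y → W ⊕ Y → Prop := fun a b =>
    a = b ∨ ∃ x, (a = Sum.inl (f x) ∧ b = Sum.inr (h x)) ∨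
      (a = Sum.inr (h x) ∧ b = Sum.inl (f x)) with hs
  have sub : ∀ a b, Relation.EqvGen r a b → s a b := by
    intro a b hab
    induction hab with
    | rel a b hab =>
      obtain ⟨x, hx1, hx2⟩ := (hrel a b).1 hab
      exact Or.inr ⟨x, Or.inl ⟨hx1, hx2⟩⟩
    | refl a => exact Or.inl rfl
    | symm a b _ ih =>
      rcases ih with rfl | ⟨x, ⟨h1, h2⟩ | ⟨h1, h2⟩⟩
      · exact Or.inl rfl
      · exact Or.inr ⟨x, Or.inr ⟨h2, h1⟩⟩
      · exact Or.inr ⟨x, Or.inl ⟨h2, h1⟩⟩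
    | trans a b c _ _ ih1 ih2 =>
      rcases ih1 with rfl | ⟨x, ⟨h1, h2⟩ | ⟨h1, h2⟩⟩
      · exact ih2
      · rcases ih2 with rfl | ⟨x', ⟨h3, h4⟩ | ⟨h3, h4⟩⟩
        · exact Or.inr ⟨x, Or.inl ⟨h1, h2⟩⟩
        · rw [h2] at h3; exact absurd h3 (by simp)
        · rw [h2] at h3
          obtain rfl := hhi (Sum.inr.inj h3)
          exact Or.inl (h1.trans h4.symm)
      · rcases ih2 with rfl | ⟨x', ⟨h3, h4⟩ | ⟨h3, h4⟩⟩
        · exact Or.inr ⟨x, Or.inr ⟨h1, h2⟩⟩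
        · rw [h2] at h3
          obtain rfl := hfi (Sum.inl.inj h3)
          exact Or.inl (h1.trans h4.symm)
        · rw [h2] at h3; exact absurd h3 (by simp)
  have key : ∀ a b, Quot.mk r a = Quot.mk r b ↔ s a b := by
    intro a b
    constructor
    · intro hab; exact sub a b (Quot.eqvGen_exact hab)
    · rintro (rfl | ⟨x, ⟨rfl, rfl⟩ | ⟨rfl, rfl⟩⟩)
      · rfl
      · exact Quot.sound ((hrel _ _).2 ⟨x, rfl, rfl⟩)
      · exact (Quot.sound ((hrel _ _).2 ⟨x, rfl, rfl⟩)).symm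
  have key1 : ∀ w w', Quot.mk r (Sum.inl w) = Quot.mk r (Sum.inl w') ↔ w = w' := by
    intro w w'; rw [key]; simp [hs]
  have key2 : ∀ w y, Quot.mk r (Sum.inl w) = Quot.mk r (Sum.inr y) ↔
      ∃ x, w = f x ∧ y = h x := by
    intro w y; rw [key]; simp [hs]
  have key3 : ∀ y y', Quot.mk r (Sum.inr y) = Quot.mk r (Sum.inr y') ↔ y = y' := by
    intro y y'; rw [key]; simp [hs]
  have hjinj : Function.Injective (fun w => Quot.mk r (Sum.inl w)) := by
    intro a b hab; exact (key1 a b).1 hab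
  have hiinj : Function.Injective (fun y => Quot.mk r (Sum.inr y)) := by
    intro a b hab; exact (key3 a b).1 hab
  have hjc : IsClosedMap (fun w => Quot.mk r (Sum.inl w)) := by
    intro C hC
    rw [← isQuotientMap_quot_mk.isClosed_preimage]
    have heq : Quot.mk r ⁻¹' ((fun w => Quot.mk r (Sum.inl w)) '' C) =
        Sum.inl '' C ∪ Sum.inr '' (h '' (f ⁻¹' C)) := by
      ext a
      cases a with
      | inl w =>
        simp only [Set.mem_preimage, Set.mem_image, Set.mem_union]
        constructor
        · rintro ⟨c, hc, hcc⟩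
          obtain rfl := (key1 c w).1 hcc
          exact Or.inl ⟨c, hc, rfl⟩
        · rintro (⟨c, hc, hcw⟩ | ⟨y, _, hy⟩)
          · obtain rfl := Sum.inl.inj hcw; exact ⟨c, hc, rfl⟩
          · exact absurd hy (by simp)
      | inr y =>
        simp only [Set.mem_preimage, Set.mem_image, Set.mem_union]
        constructor
        · rintro ⟨c, hc, hcc⟩
          obtain ⟨x, rfl, rfl⟩ := (key2 c y).1 hcc
          exact Or.inr ⟨h x, ⟨x, hc, rfl⟩, rfl⟩
        · rintro (⟨c, _, hcw⟩ | ⟨y', ⟨x, hx, rfl⟩, hy⟩)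
          · exact absurd hcw (by simp)
          · obtain rfl := Sum.inr.inj hy
            exact ⟨f x, hx, (key2 (f x) (h x)).2 ⟨x, rfl, rfl⟩⟩
    rw [heq, isClosed_sum_iff]
    constructor
    · simpa [Set.preimage_union, Set.preimage_image_eq _ Sum.inl_injective,
        Set.preimage_inr_image_inl] using hC
    · have hcl : IsClosed (h '' (f ⁻¹' C)) := hh.isClosedMap _ (hC.preimage hf.continuous)
      simpa [Set.preimage_union, Set.preimage_image_eq _ Sum.inr_injective,
        Set.preimage_inl_image_inr] using hcl
  have hic : IsClosedMap (fun y => Quot.mk r (Sum.inr y)) := by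
    intro C hC
    rw [← isQuotientMap_quot_mk.isClosed_preimage]
    have heq : Quot.mk r ⁻¹' ((fun y => Quot.mk r (Sum.inr y)) '' C) =
        Sum.inl '' (f '' (h ⁻¹' C)) ∪ Sum.inr '' C := by
      ext a
      cases a with
      | inl w =>
        simp only [Set.mem_preimage, Set.mem_image, Set.mem_union]
        constructor
        · rintro ⟨c, hc, hcc⟩
          obtain ⟨x, rfl, rfl⟩ := (key2 w c).1 hcc.symm
          exact Or.inl ⟨f x, ⟨x, hc, rfl⟩, rfl⟩
        · rintro (⟨w', ⟨x, hx, rfl⟩, hw⟩ | ⟨c, _, hcw⟩)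
          · obtain rfl := Sum.inl.inj hw
            exact ⟨h x, hx, ((key2 (f x) (h x)).2 ⟨x, rfl, rfl⟩).symm⟩
          · exact absurd hcw (by simp)
      | inr y =>
        simp only [Set.mem_preimage, Set.mem_image, Set.mem_union]
        constructor
        · rintro ⟨c, hc, hcc⟩
          obtain rfl := (key3 c y).1 hcc
          exact Or.inr ⟨c, hc, rfl⟩
        · rintro (⟨w', _, hw⟩ | ⟨c, hc, hcw⟩)
          · exact absurd hw (by simp)
          · obtain rfl := Sum.inr.inj hcw; exact ⟨c, hc, rfl⟩
    rw [heq, isClosed_sum_iff]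
    constructor
    · have hcl : IsClosed (f '' (h ⁻¹' C)) := hf.isClosedMap _ (hC.preimage hh.continuous)
      simpa [Set.preimage_union, Set.preimage_image_eq _ Sum.inl_injective,
        Set.preimage_inl_image_inr] using hcl
    · simpa [Set.preimage_union, Set.preimage_image_eq _ Sum.inr_injective,
        Set.preimage_inr_image_inl] using hC
  have hjcont : Continuous (fun w => Quot.mk r (Sum.inl w)) :=
    continuous_quot_mk.comp continuous_inl
  have hicont : Continuous (fun y => Quot.mk r (Sum.inr y)) :=
    continuous_quot_mk.comp continuous_inr
  refine ⟨IsClosedEmbedding.of_continuous_injective_isClosedMap hjcont hjinj hjc,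
    IsClosedEmbedding.of_continuous_injective_isClosedMap hicont hiinj hic, ?_, ?_, ?_⟩
  · ext z
    simp only [Set.mem_union, Set.mem_range, Set.mem_univ, iff_true]
    obtain ⟨a⟩ := z
    cases a with
    | inl w => exact Or.inl ⟨w, rfl⟩
    | inr y => exact Or.inr ⟨y, rfl⟩
  · ext z
    simp only [Set.mem_inter_iff, Set.mem_range, Set.mem_image]
    constructor
    · rintro ⟨⟨w, rfl⟩, ⟨y, hy⟩⟩
      obtain ⟨x, rfl, rfl⟩ := (key2 w y).1 hy.symm
      exact ⟨f x, ⟨x, rfl⟩, rfl⟩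
    · rintro ⟨w, ⟨x, rfl⟩, rfl⟩
      exact ⟨⟨f x, rfl⟩, ⟨h x, ((key2 (f x) (h x)).2 ⟨x, rfl, rfl⟩).symm⟩⟩
  · ext z
    simp only [Set.mem_inter_iff, Set.mem_range, Set.mem_image]
    constructor
    · rintro ⟨⟨w, hw⟩, ⟨y, rfl⟩⟩
      obtain ⟨x, rfl, rfl⟩ := (key2 w y).1 hw
      exact ⟨h x, ⟨x, rfl⟩, rfl⟩
    · rintro ⟨y, ⟨x, rfl⟩, rfl⟩
      exact ⟨⟨f x, (key2 (f x) (h x)).2 ⟨x, rfl, rfl⟩⟩, ⟨h x, rfl⟩⟩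
end

section
/- Let W and Y be topological spaces with stratifications 𝒮_W and 𝒮_Y, let X be a topological space, and let f : X → W and h : X → Y be closed embeddings such that: (i) every stratum S ∈ 𝒮_W satisfies S ⊆ f(X) or S ∩ f(X) = ∅, and every stratum T ∈ 𝒮_Y satisfies T ⊆ h(X) or T ∩ h(X) = ∅; and (ii) the two partitions induced on X coincide: {f⁻¹(S) : S ∈ 𝒮_W, S ⊆ f(X)} = {h⁻¹(T) : T ∈ 𝒮_Y, T ⊆ h(X)}. Let Z be the pushout of f and h in the category of topological spaces, with canonical maps j : W → Z and i : Y → Z. Then the family {j(S) : S ∈ 𝒮_W} ∪ {i(T) : T ∈ 𝒮_Y, T ∩ h(X) = ∅} is a stratification of Z. -/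
open Topology

/-! The pushout `Z` is covered by the closed sets `j(W)` and `i(Y)`, and `j`, `i` are closed
embeddings, so the images of the strata of `W`, resp. of `Y`, satisfy every axiom of a
stratification except covering. By the coincidence of the induced partitions, a stratum of `W`
meeting `f(X)` has the same image as a stratum of `Y`; hence each proposed stratum meeting `j(W)`
is the image of a stratum of `W` and each one meeting `i(Y)` is the image of a stratum of `Y`.
Local closedness, disjointness, local finiteness and the frontier condition can then be checked
on one piece of the closed cover at a time. -/

open Set Function

section ClosedCover

variable {Z : Type*} {A B : Set Z} {𝒜 ℬ 𝒯 : Set (Set Z)}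

theorem mem_or_mem_of_cover (hAB : A ∪ B = univ)
    (h𝒯A : ∀ P ∈ 𝒯, (P ∩ A).Nonempty → P ∈ 𝒜) (h𝒯B : ∀ P ∈ 𝒯, (P ∩ B).Nonempty → P ∈ ℬ)
    {P : Set Z} (hP : P ∈ 𝒯) {z : Z} (hz : z ∈ P) :
    (z ∈ A ∧ P ∈ 𝒜) ∨ (z ∈ B ∧ P ∈ ℬ) := by
  rcases (hAB ▸ mem_univ z : z ∈ A ∪ B) with hzA | hzB
  exacts [Or.inl ⟨hzA, h𝒯A P hP ⟨z, hz, hzA⟩⟩, Or.inr ⟨hzB, h𝒯B P hP ⟨z, hz, hzB⟩⟩]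

variable [TopologicalSpace Z]

structure IsPartialStratification (𝒜 : Set (Set Z)) : Prop where
  locallyClosed : ∀ S ∈ 𝒜, IsLocallyClosed S
  pairwiseDisjoint : 𝒜.PairwiseDisjoint id
  locallyFinite : ∀ z : Z, ∃ U ∈ 𝓝 z, {S ∈ 𝒜 | (S ∩ U).Nonempty}.Finite
  frontier_cond : ∀ S ∈ 𝒜, ∀ T ∈ 𝒜, (closure S ∩ T).Nonempty → T ⊆ closure S

theorem Stratification.isPartialStratification_image {W : Type*} [TopologicalSpace W]
    (𝒮 : Stratification W) {g : W → Z} (hg : IsClosedEmbedding g) :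
    IsPartialStratification (image g '' 𝒮.strata) where
  locallyClosed := by
    rintro _ ⟨S, hS, rfl⟩
    exact (𝒮.locallyClosed S hS).image hg.isInducing hg.isClosed_range.isLocallyClosed
  pairwiseDisjoint := by
    rintro _ ⟨S, hS, rfl⟩ _ ⟨T, hT, rfl⟩ hne
    exact (disjoint_image_iff hg.injective).2
      (𝒮.pairwiseDisjoint hS hT fun hST => hne (congrArg _ hST))
  locallyFinite := by
    intro z
    by_cases hz : z ∈ range g
    · obtain ⟨w, rfl⟩ := hz
      obtain ⟨U, hU, hfin⟩ := 𝒮.locallyFinite w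
      rw [hg.isInducing.nhds_eq_comap, Filter.mem_comap] at hU
      obtain ⟨V, hV, hVU⟩ := hU
      refine ⟨V, hV, (hfin.image (image g)).subset ?_⟩
      rintro _ ⟨⟨S, hS, rfl⟩, _, ⟨w', hw', rfl⟩, hw'V⟩
      exact ⟨S, ⟨hS, w', hw', hVU hw'V⟩, rfl⟩
    · refine ⟨(range g)ᶜ, hg.isClosed_range.isOpen_compl.mem_nhds hz, finite_empty.subset ?_⟩
      rintro _ ⟨⟨S, -, rfl⟩, _, ⟨w, -, rfl⟩, hw⟩
      exact hw ⟨w, rfl⟩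
  frontier_cond := by
    rintro _ ⟨S, hS, rfl⟩ _ ⟨T, hT, rfl⟩ hST
    rw [hg.closure_image_eq, ← image_inter hg.injective] at hST
    rw [hg.closure_image_eq]
    exact image_mono (𝒮.frontier_cond S hS T hT hST.of_image)

def Stratification.ofClosedCover (hA : IsClosed A) (hB : IsClosed B) (hAB : A ∪ B = univ)
    (h𝒜 : IsPartialStratification 𝒜) (hℬ : IsPartialStratification ℬ)
    (hne : ∀ P ∈ 𝒯, P.Nonempty) (hcov : ⋃₀ 𝒯 = univ)
    (h𝒯A : ∀ P ∈ 𝒯, (P ∩ A).Nonempty → P ∈ 𝒜) (h𝒯B : ∀ P ∈ 𝒯, (P ∩ B).Nonempty → P ∈ ℬ) :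
    Stratification Z where
  strata := 𝒯
  nonempty := hne
  locallyClosed P hP := by
    obtain ⟨z, hz⟩ := hne P hP
    rcases mem_or_mem_of_cover hAB h𝒯A h𝒯B hP hz with ⟨-, h⟩ | ⟨-, h⟩
    exacts [h𝒜.locallyClosed P h, hℬ.locallyClosed P h]
  covers := hcov
  pairwiseDisjoint P hP Q hQ hPQ := by
    refine disjoint_left.2 fun z hzP hzQ => ?_
    rcases mem_or_mem_of_cover hAB h𝒯A h𝒯B hP hzP with ⟨hzA, hP𝒜⟩ | ⟨hzB, hPℬ⟩
    · exact disjoint_left.1 (h𝒜.pairwiseDisjoint hP𝒜 (h𝒯A Q hQ ⟨z, hzQ, hzA⟩) hPQ) hzP hzQ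
    · exact disjoint_left.1 (hℬ.pairwiseDisjoint hPℬ (h𝒯B Q hQ ⟨z, hzQ, hzB⟩) hPQ) hzP hzQ
  locallyFinite z := by
    obtain ⟨U, hU, hU𝒜⟩ := h𝒜.locallyFinite z
    obtain ⟨V, hV, hVℬ⟩ := hℬ.locallyFinite z
    refine ⟨U ∩ V, Filter.inter_mem hU hV, (hU𝒜.union hVℬ).subset ?_⟩
    rintro P ⟨hP, y, hyP, hyU, hyV⟩
    rcases mem_or_mem_of_cover hAB h𝒯A h𝒯B hP hyP with ⟨-, h⟩ | ⟨-, h⟩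
    exacts [Or.inl ⟨h, y, hyP, hyU⟩, Or.inr ⟨h, y, hyP, hyV⟩]
  frontier_cond P hP Q hQ := by
    rintro ⟨z, hzP, hzQ⟩
    rw [← inter_univ P, ← hAB, inter_union_distrib_left, closure_union] at hzP
    rcases hzP with hzA | hzB
    · exact h𝒜.frontier_cond P (h𝒯A P hP (closure_nonempty_iff.1 ⟨z, hzA⟩)) Q
        (h𝒯A Q hQ ⟨z, hzQ, hA.closure_subset (closure_mono inter_subset_right hzA)⟩)
        ⟨z, closure_mono inter_subset_left hzA, hzQ⟩
    · exact hℬ.frontier_cond P (h𝒯B P hP (closure_nonempty_iff.1 ⟨z, hzB⟩)) Q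
        (h𝒯B Q hQ ⟨z, hzQ, hB.closure_subset (closure_mono inter_subset_right hzB)⟩)
        ⟨z, closure_mono inter_subset_left hzB, hzQ⟩

end ClosedCover

section Pushout

variable {X W Y : Type*} {f : X → W} {h : X → Y} {r : W ⊕ Y → W ⊕ Y → Prop}

/-- The equivalence relation generated by `inl (f x) ~ inr (h x)`, when `f` and `h` are
injective. -/
def pushoutRel (f : X → W) (h : X → Y) : W ⊕ Y → W ⊕ Y → Prop
  | .inl w, .inl w' => w = w'
  | .inl w, .inr y => ∃ x, w = f x ∧ y = h x
  | .inr y, .inl w => ∃ x, w = f x ∧ y = h x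
  | .inr y, .inr y' => y = y'

theorem pushoutRel_refl (f : X → W) (h : X → Y) : ∀ a, pushoutRel f h a a := by
  rintro (w | y) <;> rfl

theorem pushoutRel_of_quot_mk_eq (hf : Injective f) (hh : Injective h)
    (hrel : ∀ a b, r a b ↔ ∃ x, a = .inl (f x) ∧ b = .inr (h x))
    {a b : W ⊕ Y} (hab : Quot.mk r a = Quot.mk r b) : pushoutRel f h a b := by
  have hresp : ∀ b c, r b c → pushoutRel f h a b = pushoutRel f h a c := by
    intro b c hbc
    obtain ⟨x, rfl, rfl⟩ := (hrel b c).1 hbc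
    rcases a with w | y
    · exact propext ⟨fun hw => ⟨x, hw, rfl⟩,
        fun ⟨x', hw, hx⟩ => hw.trans (congrArg f (hh hx)).symm⟩
    · exact propext ⟨fun ⟨x', hx, hy⟩ => hy.trans (congrArg h (hf hx)).symm,
        fun hy => ⟨x, rfl, hy⟩⟩
  have hlift : pushoutRel f h a a = pushoutRel f h a b :=
    congrArg (Quot.lift (pushoutRel f h a) hresp) hab
  exact hlift ▸ pushoutRel_refl f h a

theorem injective_quot_mk_inl (hf : Injective f) (hh : Injective h)
    (hrel : ∀ a b, r a b ↔ ∃ x, a = .inl (f x) ∧ b = .inr (h x)) :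
    Injective (Quot.mk r ∘ Sum.inl) :=
  fun _ _ e => pushoutRel_of_quot_mk_eq hf hh hrel e

theorem injective_quot_mk_inr (hf : Injective f) (hh : Injective h)
    (hrel : ∀ a b, r a b ↔ ∃ x, a = .inl (f x) ∧ b = .inr (h x)) :
    Injective (Quot.mk r ∘ Sum.inr) :=
  fun _ _ e => pushoutRel_of_quot_mk_eq hf hh hrel e

theorem quot_mk_inl_comp_eq (hrel : ∀ a b, r a b ↔ ∃ x, a = .inl (f x) ∧ b = .inr (h x)) :
    Quot.mk r ∘ Sum.inl ∘ f = Quot.mk r ∘ Sum.inr ∘ h :=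
  funext fun x => Quot.sound ((hrel _ _).2 ⟨x, rfl, rfl⟩)

theorem preimage_quot_mk_inr_image_inl (hf : Injective f) (hh : Injective h)
    (hrel : ∀ a b, r a b ↔ ∃ x, a = .inl (f x) ∧ b = .inr (h x)) (A : Set W) :
    (Quot.mk r ∘ Sum.inr) ⁻¹' ((Quot.mk r ∘ Sum.inl) '' A) = h '' (f ⁻¹' A) := by
  ext y
  constructor
  · rintro ⟨w, hw, e⟩
    obtain ⟨x, rfl, rfl⟩ := pushoutRel_of_quot_mk_eq hf hh hrel e
    exact ⟨x, hw, rfl⟩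
  · rintro ⟨x, hx, rfl⟩
    exact ⟨f x, hx, congrFun (quot_mk_inl_comp_eq hrel) x⟩

theorem preimage_quot_mk_inl_image_inr (hf : Injective f) (hh : Injective h)
    (hrel : ∀ a b, r a b ↔ ∃ x, a = .inl (f x) ∧ b = .inr (h x)) (B : Set Y) :
    (Quot.mk r ∘ Sum.inl) ⁻¹' ((Quot.mk r ∘ Sum.inr) '' B) = f '' (h ⁻¹' B) := by
  ext w
  constructor
  · rintro ⟨y, hy, e⟩
    obtain ⟨x, rfl, rfl⟩ := pushoutRel_of_quot_mk_eq hf hh hrel e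
    exact ⟨x, hy, rfl⟩
  · rintro ⟨x, hx, rfl⟩
    exact ⟨h x, hx, (congrFun (quot_mk_inl_comp_eq hrel) x).symm⟩

theorem range_quot_mk_inl_union_range_inr :
    range (Quot.mk r ∘ Sum.inl) ∪ range (Quot.mk r ∘ Sum.inr) = univ :=
  eq_univ_of_forall <| by rintro ⟨w | y⟩; exacts [Or.inl ⟨w, rfl⟩, Or.inr ⟨y, rfl⟩]

variable [TopologicalSpace X] [TopologicalSpace W] [TopologicalSpace Y]

theorem isClosed_quot_sum_iff {C : Set (Quot r)} :
    IsClosed C ↔ IsClosed ((Quot.mk r ∘ Sum.inl) ⁻¹' C) ∧ IsClosed ((Quot.mk r ∘ Sum.inr) ⁻¹' C) :=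
  isQuotientMap_quot_mk.isCoinducing.isClosed_preimage.symm.trans isClosed_sum_iff

theorem isClosedEmbedding_quot_mk_inl (hf : IsClosedEmbedding f) (hh : IsClosedEmbedding h)
    (hrel : ∀ a b, r a b ↔ ∃ x, a = .inl (f x) ∧ b = .inr (h x)) :
    IsClosedEmbedding (Quot.mk r ∘ Sum.inl) := by
  have hinj := injective_quot_mk_inl hf.injective hh.injective hrel
  refine .of_continuous_injective_isClosedMap (by fun_prop) hinj fun C hC => ?_
  refine isClosed_quot_sum_iff.2 ⟨by rwa [preimage_image_eq _ hinj], ?_⟩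
  rw [preimage_quot_mk_inr_image_inl hf.injective hh.injective hrel]
  exact hh.isClosedMap _ (hC.preimage hf.continuous)

theorem isClosedEmbedding_quot_mk_inr (hf : IsClosedEmbedding f) (hh : IsClosedEmbedding h)
    (hrel : ∀ a b, r a b ↔ ∃ x, a = .inl (f x) ∧ b = .inr (h x)) :
    IsClosedEmbedding (Quot.mk r ∘ Sum.inr) := by
  have hinj := injective_quot_mk_inr hf.injective hh.injective hrel
  refine .of_continuous_injective_isClosedMap (by fun_prop) hinj fun C hC => ?_
  refine isClosed_quot_sum_iff.2 ⟨?_, by rwa [preimage_image_eq _ hinj]⟩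
  rw [preimage_quot_mk_inl_image_inr hf.injective hh.injective hrel]
  exact hf.isClosedMap _ (hC.preimage hh.continuous)

end Pushout

section Strata

variable {X W Y : Type*} [TopologicalSpace W] [TopologicalSpace Y] {f : X → W} {h : X → Y}
  {r : W ⊕ Y → W ⊕ Y → Prop} {𝒮W : Stratification W} {𝒮Y : Stratification Y}

theorem subset_range_and_exists_preimage_eq_of_mem
    (hYsat : ∀ T ∈ 𝒮Y.strata, T ⊆ range h ∨ T ∩ range h = ∅)
    (hcoincide : {P : Set X | ∃ S ∈ 𝒮W.strata, S ⊆ range f ∧ P = f ⁻¹' S}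
               = {P : Set X | ∃ T ∈ 𝒮Y.strata, T ⊆ range h ∧ P = h ⁻¹' T})
    {S : Set W} (hS : S ∈ 𝒮W.strata) {x : X} (hx : f x ∈ S) :
    S ⊆ range f ∧ ∃ T ∈ 𝒮Y.strata, T ⊆ range h ∧ f ⁻¹' S = h ⁻¹' T := by
  obtain ⟨T, hT, hxT⟩ := mem_sUnion.1 (𝒮Y.covers ▸ mem_univ (h x))
  have hTh : T ⊆ range h := (hYsat T hT).resolve_right fun hT₀ =>
    (eq_empty_iff_forall_notMem.1 hT₀) (h x) ⟨hxT, x, rfl⟩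
  obtain ⟨S', hS', hS'f, hS'T⟩ : h ⁻¹' T ∈ {P | ∃ S ∈ 𝒮W.strata, S ⊆ range f ∧ P = f ⁻¹' S} :=
    hcoincide ▸ ⟨T, hT, hTh, rfl⟩
  obtain rfl : S = S' := 𝒮W.pairwiseDisjoint.elim hS hS' (not_disjoint_iff.2
    ⟨f x, hx, show x ∈ f ⁻¹' S' from hS'T ▸ hxT⟩)
  exact ⟨hS'f, T, hT, hTh, hS'T.symm⟩

theorem exists_image_quot_mk_inl_eq_image_inr
    (hrel : ∀ a b, r a b ↔ ∃ x, a = .inl (f x) ∧ b = .inr (h x))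
    (hYsat : ∀ T ∈ 𝒮Y.strata, T ⊆ range h ∨ T ∩ range h = ∅)
    (hcoincide : {P : Set X | ∃ S ∈ 𝒮W.strata, S ⊆ range f ∧ P = f ⁻¹' S}
               = {P : Set X | ∃ T ∈ 𝒮Y.strata, T ⊆ range h ∧ P = h ⁻¹' T})
    {S : Set W} (hS : S ∈ 𝒮W.strata) {x : X} (hx : f x ∈ S) :
    ∃ T ∈ 𝒮Y.strata, (Quot.mk r ∘ Sum.inl) '' S = (Quot.mk r ∘ Sum.inr) '' T := by
  obtain ⟨hSf, T, hT, hTh, hST⟩ :=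
    subset_range_and_exists_preimage_eq_of_mem hYsat hcoincide hS hx
  refine ⟨T, hT, ?_⟩
  rw [← image_preimage_eq_of_subset hSf, ← image_preimage_eq_of_subset hTh, image_image,
    image_image, hST]
  exact congrArg (image · (h ⁻¹' T)) (quot_mk_inl_comp_eq hrel)

def pushoutStrata (𝒮W : Stratification W) (𝒮Y : Stratification Y) (h : X → Y)
    (r : W ⊕ Y → W ⊕ Y → Prop) : Set (Set (Quot r)) :=
  {P | ∃ S ∈ 𝒮W.strata, P = (Quot.mk r ∘ Sum.inl) '' S} ∪
    {P | ∃ T ∈ 𝒮Y.strata, T ∩ range h = ∅ ∧ P = (Quot.mk r ∘ Sum.inr) '' T}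

theorem nonempty_of_mem_pushoutStrata {P : Set (Quot r)} (hP : P ∈ pushoutStrata 𝒮W 𝒮Y h r) :
    P.Nonempty := by
  rcases hP with ⟨S, hS, rfl⟩ | ⟨T, hT, -, rfl⟩
  exacts [(𝒮W.nonempty S hS).image _, (𝒮Y.nonempty T hT).image _]

theorem sUnion_pushoutStrata (hrel : ∀ a b, r a b ↔ ∃ x, a = .inl (f x) ∧ b = .inr (h x))
    (hYsat : ∀ T ∈ 𝒮Y.strata, T ⊆ range h ∨ T ∩ range h = ∅) :
    ⋃₀ pushoutStrata 𝒮W 𝒮Y h r = univ := by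
  have hW : ∀ w, Quot.mk r (.inl w) ∈ ⋃₀ pushoutStrata 𝒮W 𝒮Y h r := fun w => by
    obtain ⟨S, hS, hwS⟩ := mem_sUnion.1 (𝒮W.covers ▸ mem_univ w)
    exact ⟨_, Or.inl ⟨S, hS, rfl⟩, w, hwS, rfl⟩
  refine eq_univ_of_forall ?_
  rintro ⟨w | y⟩
  · exact hW w
  obtain ⟨T, hT, hyT⟩ := mem_sUnion.1 (𝒮Y.covers ▸ mem_univ y)
  rcases hYsat T hT with hTh | hT₀
  · obtain ⟨x, rfl⟩ := hTh hyT
    have hglue : Quot.mk r (.inl (f x)) = Quot.mk r (.inr (h x)) :=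
      congrFun (quot_mk_inl_comp_eq hrel) x
    exact hglue ▸ hW (f x)
  · exact ⟨_, Or.inr ⟨T, hT, hT₀, rfl⟩, y, hyT, rfl⟩

theorem mem_image_quot_mk_inl_of_mem_pushoutStrata (hf : Injective f) (hh : Injective h)
    (hrel : ∀ a b, r a b ↔ ∃ x, a = .inl (f x) ∧ b = .inr (h x))
    {P : Set (Quot r)} (hP : P ∈ pushoutStrata 𝒮W 𝒮Y h r)
    (hPW : (P ∩ range (Quot.mk r ∘ Sum.inl)).Nonempty) :
    P ∈ image (Quot.mk r ∘ Sum.inl) '' 𝒮W.strata := by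
  rcases hP with ⟨S, hS, rfl⟩ | ⟨T, hT, hT₀, rfl⟩
  · exact ⟨S, hS, rfl⟩
  obtain ⟨_, ⟨y, hyT, rfl⟩, w, e⟩ := hPW
  obtain ⟨x, -, rfl⟩ := pushoutRel_of_quot_mk_eq hf hh hrel e
  exact ((eq_empty_iff_forall_notMem.1 hT₀) (h x) ⟨hyT, x, rfl⟩).elim

theorem mem_image_quot_mk_inr_of_mem_pushoutStrata (hf : Injective f) (hh : Injective h)
    (hrel : ∀ a b, r a b ↔ ∃ x, a = .inl (f x) ∧ b = .inr (h x))
    (hYsat : ∀ T ∈ 𝒮Y.strata, T ⊆ range h ∨ T ∩ range h = ∅)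
    (hcoincide : {P : Set X | ∃ S ∈ 𝒮W.strata, S ⊆ range f ∧ P = f ⁻¹' S}
               = {P : Set X | ∃ T ∈ 𝒮Y.strata, T ⊆ range h ∧ P = h ⁻¹' T})
    {P : Set (Quot r)} (hP : P ∈ pushoutStrata 𝒮W 𝒮Y h r)
    (hPY : (P ∩ range (Quot.mk r ∘ Sum.inr)).Nonempty) :
    P ∈ image (Quot.mk r ∘ Sum.inr) '' 𝒮Y.strata := by
  rcases hP with ⟨S, hS, rfl⟩ | ⟨T, hT, -, rfl⟩
  · obtain ⟨_, ⟨w, hwS, rfl⟩, y, e⟩ := hPY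
    obtain ⟨x, rfl, -⟩ := pushoutRel_of_quot_mk_eq hf hh hrel e
    obtain ⟨T, hT, hST⟩ := exists_image_quot_mk_inl_eq_image_inr hrel hYsat hcoincide hS hwS
    exact ⟨T, hT, hST.symm⟩
  · exact ⟨T, hT, rfl⟩

end Strata

theorem pushout_stratification_general {X W Y : Type*}
    [TopologicalSpace X] [TopologicalSpace W] [TopologicalSpace Y]
    (𝒮W : Stratification W) (𝒮Y : Stratification Y)
    (f : X → W) (h : X → Y)
    (hf : IsClosedEmbedding f) (hh : IsClosedEmbedding h)
    (hYsat : ∀ T ∈ 𝒮Y.strata, T ⊆ Set.range h ∨ T ∩ Set.range h = ∅)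
    (hcoincide : {P : Set X | ∃ S ∈ 𝒮W.strata, S ⊆ Set.range f ∧ P = f ⁻¹' S}
               = {P : Set X | ∃ T ∈ 𝒮Y.strata, T ⊆ Set.range h ∧ P = h ⁻¹' T})
    (r : W ⊕ Y → W ⊕ Y → Prop)
    (hrel : ∀ a b, r a b ↔ ∃ x : X, a = Sum.inl (f x) ∧ b = Sum.inr (h x))
    (j : W → Quot r) (i : Y → Quot r)
    (hj : j = fun w => Quot.mk r (Sum.inl w))
    (hi : i = fun y => Quot.mk r (Sum.inr y)) :
    ∃ 𝒵 : Stratification (Quot r),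
      𝒵.strata = {P : Set (Quot r) | ∃ S ∈ 𝒮W.strata, P = j '' S} ∪
        {P : Set (Quot r) | ∃ T ∈ 𝒮Y.strata, T ∩ Set.range h = ∅ ∧ P = i '' T} := by
  subst hj hi
  have hjc := isClosedEmbedding_quot_mk_inl hf hh hrel
  have hic := isClosedEmbedding_quot_mk_inr hf hh hrel
  exact ⟨Stratification.ofClosedCover hjc.isClosed_range hic.isClosed_range
    range_quot_mk_inl_union_range_inr (𝒮W.isPartialStratification_image hjc)
    (𝒮Y.isPartialStratification_image hic) (fun _ => nonempty_of_mem_pushoutStrata)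
    (sUnion_pushoutStrata hrel hYsat)
    (fun _ => mem_image_quot_mk_inl_of_mem_pushoutStrata hf.injective hh.injective hrel)
    (fun _ => mem_image_quot_mk_inr_of_mem_pushoutStrata hf.injective hh.injective hrel hYsat
      hcoincide), rfl⟩

/-- Amalgamation of stratified spaces along closed embeddings: if `f : X → W` and
`h : X → Y` are closed embeddings such that each stratum of `W` (resp. `Y`) is either
contained in or disjoint from the image of `f` (resp. `h`), and the induced partitions
on `X` coincide, then the images of the strata of `W` together with the images of the
strata of `Y` disjoint from `h(X)` form a stratification of the pushout `Z = W ⊔_X Y`. -/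
theorem pushout_stratification {X W Y : Type*}
    [TopologicalSpace X] [TopologicalSpace W] [TopologicalSpace Y]
    (𝒮W : Stratification W) (𝒮Y : Stratification Y)
    (f : X → W) (h : X → Y)
    (hf : IsClosedEmbedding f) (hh : IsClosedEmbedding h)
    (hWsat : ∀ S ∈ 𝒮W.strata, S ⊆ Set.range f ∨ S ∩ Set.range f = ∅)
    (hYsat : ∀ T ∈ 𝒮Y.strata, T ⊆ Set.range h ∨ T ∩ Set.range h = ∅)
    (hcoincide : {P : Set X | ∃ S ∈ 𝒮W.strata, S ⊆ Set.range f ∧ P = f ⁻¹' S}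
               = {P : Set X | ∃ T ∈ 𝒮Y.strata, T ⊆ Set.range h ∧ P = h ⁻¹' T})
    (r : W ⊕ Y → W ⊕ Y → Prop)
    (hrel : ∀ a b, r a b ↔ ∃ x : X, a = Sum.inl (f x) ∧ b = Sum.inr (h x))
    (j : W → Quot r) (i : Y → Quot r)
    (hj : j = fun w => Quot.mk r (Sum.inl w))
    (hi : i = fun y => Quot.mk r (Sum.inr y)) :
    ∃ 𝒵 : Stratification (Quot r),
      𝒵.strata = {P : Set (Quot r) | ∃ S ∈ 𝒮W.strata, P = j '' S} ∪
        {P : Set (Quot r) | ∃ T ∈ 𝒮Y.strata, T ∩ Set.range h = ∅ ∧ P = i '' T} :=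
  pushout_stratification_general 𝒮W 𝒮Y f h hf hh hYsat hcoincide r hrel j i hj hi
end
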